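/- arXiv:1012.5165 — 2 statements merged into one kernel-verified Lean document; each statement's English description precedes it below -/
import Mathlib

section
/- For every n ≥ 2 and x ∈ {α, β}, under the identification of functions Fin n → Fin 2 with pairs in Fin 2 × (Fin (n−1) → Fin 2) (splitting off the first coordinate), the recursion 𝔏_x^[n] = L_x ⊗ 𝔏_x^[n−1] + I₂ ⊗ 𝔏_x^[n−1] + L_x ⊗ I holds, where ⊗ is the Kronecker product, I₂ is the 2×2 identity and I is the identity matrix on (Fin (n−1) → Fin 2)-indexed vectors. -/
open Matrix
open scoped Kronecker


/-- The Markov generator `L_α = [[-1, 0], [1, 0]]`. -/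
noncomputable def Lalpha : Matrix (Fin 2) (Fin 2) ℝ := !![-1, 0; 1, 0]

/-- The Markov generator `L_β = [[0, 1], [0, -1]]`. -/
noncomputable def Lbeta : Matrix (Fin 2) (Fin 2) ℝ := !![0, 1; 0, -1]

/-- `X^(A)`: the operator on the `n`-fold tensor power `(ℝ²)^⊗n` (indexed by functions
`Fin n → Fin 2`) acting as `X` on the tensor factors in `A` and as the identity elsewhere:
`(X^(A))_{f,g} = (∏_{i ∈ A} X_{f(i),g(i)}) · (∏_{j ∉ A} [f(j) = g(j)])`. -/
noncomputable def opOn {n : ℕ} (X : Matrix (Fin 2) (Fin 2) ℝ) (A : Finset (Fin n)) :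
    Matrix (Fin n → Fin 2) (Fin n → Fin 2) ℝ :=
  fun f g => (∏ i ∈ A, X (f i) (g i)) * ∏ j ∈ Aᶜ, (if f j = g j then (1 : ℝ) else 0)

/-- `𝔏_X^[n] := ∑_{∅ ≠ A ⊆ Fin n} X^(A)`. -/
noncomputable def frakL (n : ℕ) (X : Matrix (Fin 2) (Fin 2) ℝ) :
    Matrix (Fin n → Fin 2) (Fin n → Fin 2) ℝ :=
  ∑ A ∈ Finset.univ.filter (fun A : Finset (Fin n) => A.Nonempty), opOn X A

/-! Summing `X^(A)` over *all* subsets `A`, including `∅` (which gives the identity), expands the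
product `∏ᵢ (X + 1)_{f i, g i}`, so `𝔏_X^[n] + 1 = (X + 1)^{⊗ n}`. Splitting off the first tensor
factor gives `𝔏_X^[n] + 1 = (X + 1) ⊗ (𝔏_X^[n-1] + 1)`, and expanding the right-hand side is the
recursion. -/

variable {n m : ℕ} (X : Matrix (Fin 2) (Fin 2) ℝ)

theorem opOn_empty : opOn (n := n) X ∅ = 1 := by
  ext f g
  simp [opOn, Finset.prod_boole, Matrix.one_apply, funext_iff]

theorem sum_opOn_apply (f g : Fin n → Fin 2) :
    (∑ A, opOn X A) f g = ∏ i, (X + 1) (f i) (g i) := by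
  simp only [Matrix.sum_apply, Matrix.add_apply, Matrix.one_apply, Finset.prod_add,
    Finset.powerset_univ]
  simp [opOn, Finset.compl_eq_univ_sdiff]

theorem frakL_add_one : frakL n X + 1 = ∑ A, opOn X A := by
  have only_empty : Finset.univ.filter (fun A : Finset (Fin n) => ¬A.Nonempty) = {∅} := by
    ext A; simp [Finset.not_nonempty_iff_eq_empty]
  rw [frakL, ← Finset.sum_filter_add_sum_filter_not Finset.univ (fun A => A.Nonempty), only_empty,
    Finset.sum_singleton, opOn_empty]

theorem reindex_consEquiv_kronecker_apply {α R : Type*} [Mul R] (A : Matrix α α R)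
    (B : Matrix (Fin m → α) (Fin m → α) R) (f g : Fin (m + 1) → α) :
    reindex (Fin.consEquiv fun _ => α) (Fin.consEquiv fun _ => α) (A ⊗ₖ B) f g =
      A (f 0) (g 0) * B (Fin.tail f) (Fin.tail g) :=
  rfl

theorem frakL_succ_add_one :
    frakL (m + 1) X + 1 =
      reindex (Fin.consEquiv fun _ => Fin 2) (Fin.consEquiv fun _ => Fin 2)
        ((X + 1) ⊗ₖ (frakL m X + 1)) := by
  ext f g
  rw [reindex_consEquiv_kronecker_apply, frakL_add_one, frakL_add_one, sum_opOn_apply,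
    sum_opOn_apply, Fin.prod_univ_succ]
  rfl

theorem frakL_succ :
    frakL (m + 1) X =
      reindex (Fin.consEquiv fun _ : Fin (m + 1) => Fin 2) (Fin.consEquiv fun _ : Fin (m + 1) => Fin 2)
        (X ⊗ₖ frakL m X + (1 : Matrix (Fin 2) (Fin 2) ℝ) ⊗ₖ frakL m X +
          X ⊗ₖ (1 : Matrix (Fin m → Fin 2) (Fin m → Fin 2) ℝ)) := by
  have expand : X ⊗ₖ frakL m X + 1 ⊗ₖ frakL m X + X ⊗ₖ 1 = (X + 1) ⊗ₖ (frakL m X + 1) - 1 := by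
    rw [add_kronecker, kronecker_add, kronecker_add, one_kronecker_one]
    abel
  rw [expand, eq_sub_of_add_eq (frakL_succ_add_one X)]
  ext f g
  simp only [reindex_apply, submatrix_apply, Matrix.sub_apply, one_apply,
    EmbeddingLike.apply_eq_iff_eq]

theorem frakL_recursion_general (m : ℕ) :
    (frakL (m + 1) Lalpha =
      Matrix.reindex (Fin.consEquiv (fun _ : Fin (m + 1) => Fin 2)) (Fin.consEquiv (fun _ : Fin (m + 1) => Fin 2))
        (Lalpha ⊗ₖ frakL m Lalpha + (1 : Matrix (Fin 2) (Fin 2) ℝ) ⊗ₖ frakL m Lalpha +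
          Lalpha ⊗ₖ (1 : Matrix (Fin m → Fin 2) (Fin m → Fin 2) ℝ))) ∧
    (frakL (m + 1) Lbeta =
      Matrix.reindex (Fin.consEquiv (fun _ : Fin (m + 1) => Fin 2)) (Fin.consEquiv (fun _ : Fin (m + 1) => Fin 2))
        (Lbeta ⊗ₖ frakL m Lbeta + (1 : Matrix (Fin 2) (Fin 2) ℝ) ⊗ₖ frakL m Lbeta +
          Lbeta ⊗ₖ (1 : Matrix (Fin m → Fin 2) (Fin m → Fin 2) ℝ))) :=
  ⟨frakL_succ Lalpha, frakL_succ Lbeta⟩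

/-- For every `n = m + 1 ≥ 2` and `x ∈ {α, β}`, under the identification of
`Fin (m+1) → Fin 2` with `Fin 2 × (Fin m → Fin 2)` (splitting off the first coordinate),
`𝔏_x^[n] = L_x ⊗ 𝔏_x^[n−1] + I₂ ⊗ 𝔏_x^[n−1] + L_x ⊗ I`. -/
theorem frakL_recursion (m : ℕ) (hm : 1 ≤ m) :
    (frakL (m + 1) Lalpha =
      Matrix.reindex (Fin.consEquiv (fun _ : Fin (m + 1) => Fin 2)) (Fin.consEquiv (fun _ : Fin (m + 1) => Fin 2))
        (Lalpha ⊗ₖ frakL m Lalpha + (1 : Matrix (Fin 2) (Fin 2) ℝ) ⊗ₖ frakL m Lalpha +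
          Lalpha ⊗ₖ (1 : Matrix (Fin m → Fin 2) (Fin m → Fin 2) ℝ))) ∧
    (frakL (m + 1) Lbeta =
      Matrix.reindex (Fin.consEquiv (fun _ : Fin (m + 1) => Fin 2)) (Fin.consEquiv (fun _ : Fin (m + 1) => Fin 2))
        (Lbeta ⊗ₖ frakL m Lbeta + (1 : Matrix (Fin 2) (Fin 2) ℝ) ⊗ₖ frakL m Lbeta +
          Lbeta ⊗ₖ (1 : Matrix (Fin m → Fin 2) (Fin m → Fin 2) ℝ))) :=
  frakL_recursion_general m
end

section
/- For all real numbers α, β and every n ≥ 1, Δ_{n−1}·exp(α·L_α + β·L_β) = exp(α·𝔏_α^[n] + β·𝔏_β^[n])·Δ_{n−1}. -/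
open Matrix


/-- The iterated splitting operator `Δ_{n−1}`, with `(Δ_{n−1})_{f,k} = 1` iff `f` is the
constant function with value `k`. -/
noncomputable def Delta (n : ℕ) : Matrix (Fin n → Fin 2) (Fin 2) ℝ :=
  fun f k => if f = fun _ => k then 1 else 0

/-!
Expanding the product over the tensor factors gives `𝔏_X^[n] = (1 + X)^⊗n - 1`. For `X = L_α`
and `X = L_β` the matrix `1 + X` is the matrix of a map `σ` of the two states (its `k`-th column
is the basis vector `e_{σ k}`), so `(1 + X)^⊗n` sends the constant configuration `k` to the
constant configuration `σ k`, i.e. `(1 + X)^⊗n Δ = Δ (1 + X)`. Hence `𝔏_X^[n] Δ = Δ X`, and this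
intertwining relation passes to the exponential series term by term.
-/

open NormedSpace

theorem Finset.sum_filter_nonempty_prod_mul_prod_compl {ι R : Type*} [Fintype ι] [DecidableEq ι]
    [CommRing R] (s t : ι → R) :
    ∑ A ∈ univ.filter (fun A : Finset ι => A.Nonempty), (∏ i ∈ A, s i) * ∏ j ∈ Aᶜ, t j =
      ∏ i, (s i + t i) - ∏ i, t i := by
  have hempty : univ.filter (fun A : Finset ι => ¬ A.Nonempty) = {∅} := by
    ext A; simp [Finset.not_nonempty_iff_eq_empty]
  rw [eq_sub_iff_add_eq, prod_add, powerset_univ, ← sum_filter_add_sum_filter_not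
    (univ : Finset (Finset ι)) (fun A : Finset ι => A.Nonempty), hempty, sum_singleton]
  simp [compl_eq_univ_sdiff]

open scoped Norms.Operator in
theorem Matrix.exp_mul_eq_mul_exp_of_mul_eq {𝕂 I J : Type*} [RCLike 𝕂]
    [Fintype I] [DecidableEq I] [Fintype J] [DecidableEq J]
    {M : Matrix I I 𝕂} {G : Matrix J J 𝕂} {D : Matrix I J 𝕂}
    (h : M * D = D * G) : exp M * D = D * exp G := by
  have hpow (k : ℕ) : M ^ k * D = D * G ^ k := by
    induction k with
    | zero => simp
    | succ k ih => rw [pow_succ, pow_succ, Matrix.mul_assoc, h, ← Matrix.mul_assoc, ih,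
        Matrix.mul_assoc]
  let mulRightD := (mulRightLinearMap I 𝕂 D).toContinuousLinearMap
  let mulLeftD := (mulLeftLinearMap J 𝕂 D).toContinuousLinearMap
  rw [exp_eq_tsum 𝕂, exp_eq_tsum 𝕂]
  calc (∑' k : ℕ, (k.factorial : 𝕂)⁻¹ • M ^ k) * D
      = ∑' k : ℕ, ((k.factorial : 𝕂)⁻¹ • M ^ k) * D :=
        mulRightD.map_tsum (expSeries_summable' M)
    _ = ∑' k : ℕ, D * ((k.factorial : 𝕂)⁻¹ • G ^ k) := by
        simp only [Matrix.smul_mul, Matrix.mul_smul, hpow]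
    _ = D * ∑' k : ℕ, (k.factorial : 𝕂)⁻¹ • G ^ k :=
        (mulLeftD.map_tsum (expSeries_summable' G)).symm

theorem frakL_apply (n : ℕ) (X : Matrix (Fin 2) (Fin 2) ℝ) (f g : Fin n → Fin 2) :
    frakL n X f g = ∏ i, (X + 1) (f i) (g i) - (1 : Matrix (Fin n → Fin 2) _ ℝ) f g := by
  have hdiag : ∏ i, (1 : Matrix (Fin 2) (Fin 2) ℝ) (f i) (g i) =
      (1 : Matrix (Fin n → Fin 2) _ ℝ) f g := by
    simp [Finset.prod_boole, one_apply, funext_iff]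
  simp only [← hdiag, Matrix.add_apply]
  rw [← Finset.sum_filter_nonempty_prod_mul_prod_compl]
  simp [frakL, opOn, Matrix.sum_apply, one_apply]

theorem mul_Delta_apply {m : Type*} {n : ℕ} (M : Matrix m (Fin n → Fin 2) ℝ) (x : m)
    (k : Fin 2) :
    (M * Delta n) x k = M x (fun _ => k) := by
  simp [mul_apply, Delta]

theorem frakL_mul_Delta {n : ℕ} {X : Matrix (Fin 2) (Fin 2) ℝ} (σ : Fin 2 → Fin 2)
    (hX : X + 1 = of fun a k => if a = σ k then 1 else 0) :
    frakL n X * Delta n = Delta n * X := by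
  ext f k
  rw [mul_Delta_apply, frakL_apply, hX, eq_sub_of_add_eq hX, Matrix.mul_sub, Matrix.mul_one,
    Matrix.sub_apply]
  congr 1
  simp [mul_apply, Delta, Finset.prod_boole, funext_iff]

theorem delta_intertwine_exp_general (α β : ℝ) (n : ℕ) :
    Delta n * NormedSpace.exp (α • Lalpha + β • Lbeta) =
      NormedSpace.exp (α • frakL n Lalpha + β • frakL n Lbeta) * Delta n := by
  have hα : frakL n Lalpha * Delta n = Delta n * Lalpha :=
    frakL_mul_Delta (fun _ => 1) (by ext a k; fin_cases a <;> fin_cases k <;> simp [Lalpha])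
  have hβ : frakL n Lbeta * Delta n = Delta n * Lbeta :=
    frakL_mul_Delta (fun _ => 0) (by ext a k; fin_cases a <;> fin_cases k <;> simp [Lbeta])
  refine (exp_mul_eq_mul_exp_of_mul_eq ?_).symm
  simp only [Matrix.add_mul, Matrix.mul_add, Matrix.smul_mul, Matrix.mul_smul, hα, hβ]

/-- For all real `α, β` and every `n ≥ 1`,
`Δ_{n−1}·exp(α·L_α + β·L_β) = exp(α·𝔏_α^[n] + β·𝔏_β^[n])·Δ_{n−1}`. -/
theorem delta_intertwine_exp (α β : ℝ) (n : ℕ) (hn : 1 ≤ n) :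
    Delta n * NormedSpace.exp (α • Lalpha + β • Lbeta) =
      NormedSpace.exp (α • frakL n Lalpha + β • frakL n Lbeta) * Delta n :=
  delta_intertwine_exp_general α β n
end
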